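/- In the 3-player game with A_1 = {T,B}, A_2 = {L,R}, A_3 = {E} and payoffs u(T,L) = (1,1,0), u(T,R) = (0,0,1), u(B,L) = (0,0,−1), u(B,R) = (1,1,0), the mixed pessimistic Stackelberg value for the optimizer (player 3) equals 0. -/
import Mathlib


open Finset

noncomputable section

/-- Learners' coordination utility in the game of Counterexample 2:
payoff 1 on (T,L) and (B,R), else 0. `T`,`L` are `true`; `B`,`R` are `false`. -/
def uL (a b : Bool) : ℝ := if a = b then 1 else 0

/-- Optimizer's utility: `u3(T,L)=0, u3(T,R)=1, u3(B,L)=-1, u3(B,R)=0`. -/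
def u3 (a b : Bool) : ℝ :=
  if a = true ∧ b = false then 1 else if a = false ∧ b = true then -1 else 0

/-- Expected value of a payoff function under a mixed profile `(z₁, z₂)`. -/
def pay (f : Bool → Bool → ℝ) (z₁ z₂ : Bool → ℝ) : ℝ :=
  ∑ a, ∑ b, z₁ a * z₂ b * f a b


lemma mem_simplex_bool (z : Bool → ℝ) :
    z ∈ stdSimplex ℝ Bool ↔ (0 ≤ z true ∧ 0 ≤ z false ∧ z true + z false = 1) := by
  constructor
  · rintro ⟨h1, h2⟩
    rw [Fintype.sum_bool] at h2
    exact ⟨h1 true, h1 false, h2⟩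
  · rintro ⟨h1, h2, h3⟩
    exact ⟨fun b => by cases b <;> assumption, by rw [Fintype.sum_bool]; exact h3⟩

lemma pureT_mem : (fun b : Bool => if b then (1:ℝ) else 0) ∈ stdSimplex ℝ Bool := by
  rw [mem_simplex_bool]; norm_num

lemma pureB_mem : (fun b : Bool => if b then (0:ℝ) else 1) ∈ stdSimplex ℝ Bool := by
  rw [mem_simplex_bool]; norm_num

/-- In the game of Counterexample 2, the mixed pessimistic Stackelberg value of
the optimizer (player 3, with a single action) equals 0: the minimum of the
optimizer's utility over mixed Nash equilibria of the learners' game is 0. -/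
theorem mixed_pessimistic_stackelberg_value_eq_zero :
    sInf {v | ∃ z₁ ∈ stdSimplex ℝ Bool, ∃ z₂ ∈ stdSimplex ℝ Bool,
      (∀ w ∈ stdSimplex ℝ Bool, pay uL w z₂ ≤ pay uL z₁ z₂) ∧
      (∀ w ∈ stdSimplex ℝ Bool, pay uL z₁ w ≤ pay uL z₁ z₂) ∧
      v = pay u3 z₁ z₂} = 0 := by
  set S := {v | ∃ z₁ ∈ stdSimplex ℝ Bool, ∃ z₂ ∈ stdSimplex ℝ Bool,
      (∀ w ∈ stdSimplex ℝ Bool, pay uL w z₂ ≤ pay uL z₁ z₂) ∧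
      (∀ w ∈ stdSimplex ℝ Bool, pay uL z₁ w ≤ pay uL z₁ z₂) ∧
      v = pay u3 z₁ z₂} with hS
  have hmem : (0:ℝ) ∈ S := by
    refine ⟨_, pureT_mem, _, pureT_mem, ?_, ?_, ?_⟩
    · intro w hw
      rw [mem_simplex_bool] at hw
      simp [pay, Fintype.sum_bool, uL]
      linarith [hw.1, hw.2.1, hw.2.2]
    · intro w hw
      rw [mem_simplex_bool] at hw
      simp [pay, Fintype.sum_bool, uL]
      linarith [hw.1, hw.2.1, hw.2.2]
    · simp [pay, Fintype.sum_bool, u3]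
  have hlb : ∀ v ∈ S, (0:ℝ) ≤ v := by
    rintro v ⟨z₁, hz₁, z₂, hz₂, hbr1, hbr2, rfl⟩
    rw [mem_simplex_bool] at hz₁ hz₂
    obtain ⟨hp0, hp0', hpsum⟩ := hz₁
    obtain ⟨hq0, hq0', hqsum⟩ := hz₂
    set p := z₁ true
    set q := z₂ true
    have h1 := hbr1 _ pureT_mem
    have h2 := hbr1 _ pureB_mem
    have h3 := hbr2 _ pureT_mem
    have h4 := hbr2 _ pureB_mem
    simp [pay, Fintype.sum_bool, uL] at h1 h2 h3 h4
    have hpq : p = q := by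
      nlinarith [h1, h2, h3, h4, hp0, hp0', hq0, hq0', hpsum, hqsum,
        sq_nonneg (p - q), sq_nonneg (p + q - 1)]
    simp [pay, Fintype.sum_bool, u3]
    nlinarith [hpq]
  exact le_antisymm (csInf_le ⟨0, hlb⟩ hmem) (le_csInf ⟨0, hmem⟩ hlb)
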